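/- arXiv:1707.05543 — 2 statements merged into one kernel-verified Lean document; each statement's English description precedes it below -/
import Mathlib

section
/- Let π be a two-qubit density matrix satisfying U_θ π U_θ† = π for all θ ∈ ℝ. Suppose σ* is a separable two-qubit density matrix such that D_max(π‖σ*) ≤ D_max(π‖σ) for every separable two-qubit density matrix σ. Then the averaged state σ̄ := (1/2π)·∫₀^{2π} U_θ σ* U_θ† dθ is a separable two-qubit density matrix and D_max(π‖σ̄) = D_max(π‖σ*). Moreover, if σ* minimizes D_max(π‖·) over separable two-qubit density matrices σ with Tr_B σ = I₂/2, then additionally Tr_B σ̄ = I₂/2 and the same equality D_max(π‖σ̄) = D_max(π‖σ*) holds. -/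
open scoped Kronecker ComplexOrder
open Matrix

noncomputable section

/-- A density matrix: positive semidefinite with unit trace. -/
def IsDensity {n : Type*} [Fintype n] (M : Matrix n n ℂ) : Prop :=
  M.PosSemidef ∧ M.trace = 1

/-- A bipartite density matrix is separable if it is a finite convex combination of
Kronecker products of density matrices on the two factors. -/
def SepState {m k : Type*} [Fintype m] [Fintype k]
    (M : Matrix (m × k) (m × k) ℂ) : Prop :=
  ∃ (L : ℕ) (p : Fin L → ℝ) (P : Fin L → Matrix m m ℂ) (Q : Fin L → Matrix k k ℂ),
    (∀ i, 0 ≤ p i) ∧ (∑ i, p i) = 1 ∧ (∀ i, IsDensity (P i)) ∧ (∀ i, IsDensity (Q i)) ∧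
    M = ∑ i, ((p i : ℂ) • (P i ⊗ₖ Q i))

/-- Max-relative entropy `D_max(ρ‖σ) = inf {x : 2^x • σ - ρ ⪰ 0}`, `+∞` if no such `x`. -/
def Dmax {n : Type*} [Fintype n] (ρ σ : Matrix n n ℂ) : EReal :=
  sInf {x : EReal | ∃ r : ℝ, x = (r : EReal) ∧ (((2:ℝ) ^ r) • σ - ρ).PosSemidef}

/-- Partial trace over the second tensor factor. -/
def ptraceB {m k : Type*} [Fintype k] (M : Matrix (m × k) (m × k) ℂ) : Matrix m m ℂ :=
  Matrix.of fun i j => ∑ b, M (i, b) (j, b)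

/-- The diagonal two-qubit phase unitary `U_θ = diag(1, e^{iθ}, e^{-iθ}, 1)`. -/
def Utheta (θ : ℝ) : Matrix (Fin 2 × Fin 2) (Fin 2 × Fin 2) ℂ :=
  Matrix.diagonal fun p => Complex.exp (Complex.I * θ * (((p.2 : ℕ) : ℂ) - ((p.1 : ℕ) : ℂ)))

/-- Phase-averaged state `(1/2π) ∫₀^{2π} U_θ σ U_θ† dθ`, defined entrywise. -/
def avgState (σ : Matrix (Fin 2 × Fin 2) (Fin 2 × Fin 2) ℂ) :
    Matrix (Fin 2 × Fin 2) (Fin 2 × Fin 2) ℂ :=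
  Matrix.of fun p q =>
    ((1 / (2 * Real.pi) : ℝ) : ℂ) *
      ∫ θ in (0:ℝ)..(2 * Real.pi), (Utheta θ * σ * (Utheta θ)ᴴ) p q

/-!
Write `c(a, b) = b - a` for the charge of the basis vector `|a b⟩`. Conjugation by `U_θ`
multiplies the entry `σ_{pq}` by `e^{iθ (c p - c q)}`, so the phase average is the dephasing map
that keeps exactly the entries with `c p = c q`. Since `|c p - c q| ≤ 2`, the same map is the
average of the conjugations by `U_θ` over `θ = 2πn/3`, `n = 0, 1, 2`, and each
`U_θ = diag(1, e^{-iθ}) ⊗ diag(1, e^{iθ})` is a local unitary. Hence dephasing is a positive,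
trace-preserving map that preserves separability and leaves a diagonal marginal unchanged, while
it fixes the invariant state `π`. By data processing for `D_max`, the dephased optimiser is no
worse than the optimiser itself, and minimality gives the reverse inequality.
-/

open Complex

section General

variable {m n : Type*} [Fintype m] [Fintype n]

theorem Dmax_map_le (Φ : Matrix m m ℂ →ₗ[ℂ] Matrix n n ℂ)
    (hΦ : ∀ M, M.PosSemidef → (Φ M).PosSemidef) (ρ σ : Matrix m m ℂ) :
    Dmax (Φ ρ) (Φ σ) ≤ Dmax ρ σ := by
  refine sInf_le_sInf ?_
  rintro x ⟨r, rfl, h⟩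
  refine ⟨r, rfl, ?_⟩
  simpa only [map_sub, LinearMap.map_smul_of_tower] using hΦ _ h

theorem IsDensity.unitary_conj [DecidableEq n] {U M : Matrix n n ℂ} (hU : Uᴴ * U = 1)
    (hM : IsDensity M) : IsDensity (U * M * Uᴴ) :=
  ⟨hM.1.mul_mul_conjTranspose_same U, by rw [trace_mul_cycle, hU, one_mul, hM.2]⟩

theorem SepState.of_fintype {ι : Type*} [Fintype ι] (p : ι → ℝ) (P : ι → Matrix m m ℂ)
    (Q : ι → Matrix n n ℂ) (hp : ∀ i, 0 ≤ p i) (hsum : ∑ i, p i = 1)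
    (hP : ∀ i, IsDensity (P i)) (hQ : ∀ i, IsDensity (Q i)) :
    SepState (∑ i, (p i : ℂ) • (P i ⊗ₖ Q i)) := by
  let e := (Fintype.equivFin ι).symm
  refine ⟨Fintype.card ι, p ∘ e, P ∘ e, Q ∘ e, fun _ => hp _, ?_, fun _ => hP _,
    fun _ => hQ _, (e.sum_comp _).symm⟩
  rw [← hsum]
  exact e.sum_comp p

end General

def qubitPhase (θ : ℝ) : Matrix (Fin 2) (Fin 2) ℂ :=
  diagonal fun i => exp (I * θ * (i : ℕ))

theorem qubitPhase_conjTranspose_mul_self (θ : ℝ) : (qubitPhase θ)ᴴ * qubitPhase θ = 1 := by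
  rw [qubitPhase, diagonal_conjTranspose, diagonal_mul_diagonal, ← diagonal_one]
  congr 1
  funext i
  rw [Pi.star_apply, star_def, ← exp_conj, ← exp_add]
  simp

def charge (p : Fin 2 × Fin 2) : ℤ := ((p.2 : ℕ) : ℤ) - ((p.1 : ℕ) : ℤ)

theorem charge_bounds (p : Fin 2 × Fin 2) : -1 ≤ charge p ∧ charge p ≤ 1 := by
  have := p.1.is_lt
  have := p.2.is_lt
  unfold charge
  omega

theorem Utheta_eq_kronecker (θ : ℝ) : Utheta θ = qubitPhase (-θ) ⊗ₖ qubitPhase θ := by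
  rw [qubitPhase, qubitPhase, diagonal_kronecker_diagonal, Utheta]
  congr 1
  funext p
  rw [← exp_add]
  push_cast
  ring_nf

theorem Utheta_conj_apply (θ : ℝ) (M : Matrix (Fin 2 × Fin 2) (Fin 2 × Fin 2) ℂ)
    (p q : Fin 2 × Fin 2) :
    (Utheta θ * M * (Utheta θ)ᴴ) p q
      = exp (I * θ * ((charge p - charge q : ℤ) : ℂ)) * M p q := by
  rw [Utheta, diagonal_conjTranspose, mul_diagonal, diagonal_mul, Pi.star_apply, star_def,
    ← exp_conj, mul_right_comm, ← exp_add]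
  congr 2
  simp only [charge, map_mul, map_sub, conj_I, conj_ofReal, map_natCast]
  push_cast
  ring

theorem Utheta_conj_kronecker (θ : ℝ) (P Q : Matrix (Fin 2) (Fin 2) ℂ) :
    Utheta θ * (P ⊗ₖ Q) * (Utheta θ)ᴴ
      = (qubitPhase (-θ) * P * (qubitPhase (-θ))ᴴ) ⊗ₖ
          (qubitPhase θ * Q * (qubitPhase θ)ᴴ) := by
  rw [Utheta_eq_kronecker, conjTranspose_kronecker, ← mul_kronecker_mul, ← mul_kronecker_mul]

theorem integral_exp_I_mul_int (k : ℤ) :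
    ∫ θ in (0 : ℝ)..2 * Real.pi, exp (I * θ * k)
      = if k = 0 then ((2 * Real.pi : ℝ) : ℂ) else 0 := by
  split_ifs with hk
  · simp [hk]
  · have hc : I * k ≠ 0 := by simp [hk, I_ne_zero]
    have harg : ∀ θ : ℝ, I * θ * k = I * k * θ := fun θ => by ring
    simp_rw [harg]
    rw [integral_exp_mul_complex hc, ofReal_zero, mul_zero, exp_zero, div_eq_zero_iff, sub_eq_zero]
    left
    rw [← exp_int_mul_two_pi_mul_I k]
    push_cast
    ring_nf

theorem sum_fin_three_exp_eq_zero {k : ℤ} (hk : ¬ (3 : ℤ) ∣ k) :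
    ∑ n : Fin 3, exp (I * (2 * Real.pi * n / 3 : ℝ) * k) = 0 := by
  have hζ := Complex.isPrimitiveRoot_exp 3 (by norm_num)
  set z := exp (2 * Real.pi * I / (3 : ℕ)) ^ k with hz
  have hz1 : z ≠ 1 := by
    rw [hz, ne_eq, hζ.zpow_eq_one_iff_dvd]
    exact_mod_cast hk
  have hz3 : z ^ 3 = 1 := by
    rw [hz, ← zpow_natCast, ← _root_.zpow_mul, mul_comm k, _root_.zpow_mul, zpow_natCast,
      hζ.pow_eq_one, _root_.one_zpow]
  have hterm : ∀ n : Fin 3, exp (I * (2 * Real.pi * n / 3 : ℝ) * k) = z ^ (n : ℕ) := by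
    intro n
    rw [hz, ← exp_int_mul, ← exp_nat_mul]
    push_cast
    ring_nf
  have hgeom := geom_sum_mul z 3
  rw [hz3, sub_self] at hgeom
  simp only [hterm, Fin.sum_univ_eq_sum_range (fun n => z ^ n)]
  exact (mul_eq_zero.mp hgeom).resolve_right (sub_ne_zero.mpr hz1)

def dephase : Matrix (Fin 2 × Fin 2) (Fin 2 × Fin 2) ℂ →ₗ[ℂ]
    Matrix (Fin 2 × Fin 2) (Fin 2 × Fin 2) ℂ where
  toFun M := of fun p q => if charge p = charge q then M p q else 0
  map_add' M N := by
    ext p q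
    simp only [of_apply, Matrix.add_apply]
    split_ifs <;> simp
  map_smul' c M := by
    ext p q
    simp only [of_apply, Matrix.smul_apply, RingHom.id_apply]
    split_ifs <;> simp

section Dephase

variable (M : Matrix (Fin 2 × Fin 2) (Fin 2 × Fin 2) ℂ)

theorem dephase_apply (p q : Fin 2 × Fin 2) :
    dephase M p q = if charge p = charge q then M p q else 0 :=
  rfl

theorem avgState_eq_dephase : avgState M = dephase M := by
  ext p q
  simp only [avgState, of_apply, Utheta_conj_apply, intervalIntegral.integral_mul_const,
    integral_exp_I_mul_int, sub_eq_zero, dephase_apply]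
  split_ifs
  · push_cast
    field_simp
  · simp

theorem dephase_eq_average :
    dephase M = (3 : ℂ)⁻¹ •
      ∑ n : Fin 3, Utheta (2 * Real.pi * n / 3) * M * (Utheta (2 * Real.pi * n / 3))ᴴ := by
  ext p q
  simp only [Matrix.smul_apply, Matrix.sum_apply, Utheta_conj_apply, ← Finset.sum_mul,
    dephase_apply, smul_eq_mul]
  split_ifs with h
  · simp [h]
  · have hk : ¬ (3 : ℤ) ∣ charge p - charge q := by
      have := charge_bounds p
      have := charge_bounds q
      omega
    rw [sum_fin_three_exp_eq_zero hk, zero_mul, mul_zero]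

theorem ptraceB_dephase : ptraceB (dephase M) = diagonal (ptraceB M).diag := by
  ext i j
  simp only [ptraceB, dephase_apply, of_apply, diagonal_apply, diag_apply]
  split_ifs with h
  · simp [h]
  · have hcharge : ∀ b : Fin 2, charge (i, b) ≠ charge (j, b) := fun b hb =>
      h (Fin.ext (by simp only [charge] at hb; omega))
    simp [hcharge]

theorem trace_dephase : (dephase M).trace = M.trace := by
  simp [trace, dephase_apply]

variable {M}

theorem dephase_posSemidef (hM : M.PosSemidef) : (dephase M).PosSemidef := by
  rw [dephase_eq_average]
  exact (posSemidef_sum _ fun n _ => hM.mul_mul_conjTranspose_same _).smul (by positivity)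

theorem IsDensity.dephase (hM : IsDensity M) : IsDensity (dephase M) :=
  ⟨dephase_posSemidef hM.1, by rw [trace_dephase, hM.2]⟩

theorem dephase_eq_self_of_invariant (hM : ∀ θ : ℝ, Utheta θ * M * (Utheta θ)ᴴ = M) :
    dephase M = M := by
  rw [dephase_eq_average]
  simp only [hM, Finset.sum_const, Finset.card_univ, Fintype.card_fin,
    ← Nat.cast_smul_eq_nsmul ℂ, smul_smul]
  norm_num

theorem SepState.dephase (hM : SepState M) : SepState (dephase M) := by
  obtain ⟨L, p, P, Q, hp, hsum, hP, hQ, rfl⟩ := hM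
  let θ : Fin 3 → ℝ := fun n => 2 * Real.pi * n / 3
  have hsep := SepState.of_fintype (ι := Fin 3 × Fin L) (fun x => p x.2 / 3)
    (fun x => qubitPhase (-θ x.1) * P x.2 * (qubitPhase (-θ x.1))ᴴ)
    (fun x => qubitPhase (θ x.1) * Q x.2 * (qubitPhase (θ x.1))ᴴ)
    (fun x => div_nonneg (hp x.2) (by norm_num))
    (by simp [Fintype.sum_prod_type, ← Finset.sum_div, hsum])
    (fun x => (hP x.2).unitary_conj (qubitPhase_conjTranspose_mul_self _))
    (fun x => (hQ x.2).unitary_conj (qubitPhase_conjTranspose_mul_self _))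
  convert hsep using 1
  rw [dephase_eq_average, Fintype.sum_prod_type, Finset.smul_sum]
  refine Finset.sum_congr rfl fun n _ => ?_
  rw [Finset.mul_sum, Finset.sum_mul, Finset.smul_sum]
  refine Finset.sum_congr rfl fun i _ => ?_
  rw [mul_smul_comm, smul_mul_assoc, Utheta_conj_kronecker, smul_smul]
  congr 1
  push_cast
  ring

end Dephase

theorem stmt1_general (π₀ σs : Matrix (Fin 2 × Fin 2) (Fin 2 × Fin 2) ℂ)
    (hinv : ∀ θ : ℝ, Utheta θ * π₀ * (Utheta θ)ᴴ = π₀) :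
    ((IsDensity σs ∧ SepState σs ∧
        (∀ σ : Matrix (Fin 2 × Fin 2) (Fin 2 × Fin 2) ℂ,
          IsDensity σ → SepState σ → Dmax π₀ σs ≤ Dmax π₀ σ)) →
      (IsDensity (avgState σs) ∧ SepState (avgState σs) ∧
        Dmax π₀ (avgState σs) = Dmax π₀ σs)) ∧
    ((IsDensity σs ∧ SepState σs ∧ ptraceB σs = ((2:ℂ))⁻¹ • 1 ∧
        (∀ σ : Matrix (Fin 2 × Fin 2) (Fin 2 × Fin 2) ℂ,
          IsDensity σ → SepState σ → ptraceB σ = ((2:ℂ))⁻¹ • 1 →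
            Dmax π₀ σs ≤ Dmax π₀ σ)) →
      (IsDensity (avgState σs) ∧ SepState (avgState σs) ∧
        ptraceB (avgState σs) = ((2:ℂ))⁻¹ • 1 ∧
        Dmax π₀ (avgState σs) = Dmax π₀ σs)) := by
  have hle : Dmax π₀ (dephase σs) ≤ Dmax π₀ σs := by
    simpa only [dephase_eq_self_of_invariant hinv] using
      Dmax_map_le dephase (fun _ => dephase_posSemidef) π₀ σs
  simp only [avgState_eq_dephase]
  refine ⟨fun ⟨hd, hs, hmin⟩ => ?_, fun ⟨hd, hs, hB, hmin⟩ => ?_⟩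
  · exact ⟨hd.dephase, hs.dephase, hle.antisymm (hmin _ hd.dephase hs.dephase)⟩
  · have hB' : ptraceB (dephase σs) = (2 : ℂ)⁻¹ • 1 := by
      rw [ptraceB_dephase, hB, (isDiag_one.smul _).diagonal_diag]
    exact ⟨hd.dephase, hs.dephase, hB', hle.antisymm (hmin _ hd.dephase hs.dephase hB')⟩

/-- If `π₀` is a `U_θ`-invariant two-qubit density matrix and `σs` minimizes
`D_max(π₀‖·)` over separable states (resp. over separable states with maximally mixed
`B`-marginal), then its phase average is separable (resp. also has maximally mixed
`B`-marginal) and achieves the same value of `D_max(π₀‖·)`. -/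
theorem stmt1 (π₀ σs : Matrix (Fin 2 × Fin 2) (Fin 2 × Fin 2) ℂ)
    (hπ : IsDensity π₀) (hinv : ∀ θ : ℝ, Utheta θ * π₀ * (Utheta θ)ᴴ = π₀) :
    ((IsDensity σs ∧ SepState σs ∧
        (∀ σ : Matrix (Fin 2 × Fin 2) (Fin 2 × Fin 2) ℂ,
          IsDensity σ → SepState σ → Dmax π₀ σs ≤ Dmax π₀ σ)) →
      (IsDensity (avgState σs) ∧ SepState (avgState σs) ∧
        Dmax π₀ (avgState σs) = Dmax π₀ σs)) ∧
    ((IsDensity σs ∧ SepState σs ∧ ptraceB σs = ((2:ℂ))⁻¹ • 1 ∧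
        (∀ σ : Matrix (Fin 2 × Fin 2) (Fin 2 × Fin 2) ℂ,
          IsDensity σ → SepState σ → ptraceB σ = ((2:ℂ))⁻¹ • 1 →
            Dmax π₀ σs ≤ Dmax π₀ σ)) →
      (IsDensity (avgState σs) ∧ SepState (avgState σs) ∧
        ptraceB (avgState σs) = ((2:ℂ))⁻¹ • 1 ∧
        Dmax π₀ (avgState σs) = Dmax π₀ σs)) :=
  stmt1_general π₀ σs hinv
end
end

section
/- For every λ ∈ [0,1], the max-relative entropy of entanglement of the qubit amplitude damping channel satisfies E_max(N^ad_λ) = log₂(2−λ). -/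
open scoped Kronecker ComplexOrder
open Matrix

noncomputable section

/-- The extension `id ⊗ T` of a map on matrices to a bipartite system. -/
def idTensorFun {n d d' : Type*} (T : Matrix d d ℂ → Matrix d' d' ℂ)
    (M : Matrix (n × d) (n × d) ℂ) : Matrix (n × d') (n × d') ℂ :=
  Matrix.of fun p q => T (Matrix.of fun a b => M (p.1, a) (q.1, b)) p.2 q.2

/-- The maximally entangled state `ψ_d = (1/d) ∑_{i,j} |ii⟩⟨jj|`. -/
def maxEnt (d : ℕ) : Matrix (Fin d × Fin d) (Fin d × Fin d) ℂ :=
  Matrix.of fun p q => if p.1 = p.2 ∧ q.1 = q.2 then (1 / (d:ℂ)) else 0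

/-- Trace preservation for a linear map on matrices. -/
def IsTracePreserving {d d' : ℕ}
    (N : Matrix (Fin d) (Fin d) ℂ →ₗ[ℂ] Matrix (Fin d') (Fin d') ℂ) : Prop :=
  ∀ M, (N M).trace = M.trace

/-- Complete positivity: `id_n ⊗ N` maps positive semidefinite matrices to positive
semidefinite matrices, for every finite ancilla dimension `n`. -/
def IsCompletelyPositive {d d' : ℕ}
    (N : Matrix (Fin d) (Fin d) ℂ →ₗ[ℂ] Matrix (Fin d') (Fin d') ℂ) : Prop :=
  ∀ (n : ℕ) (M : Matrix (Fin n × Fin d) (Fin n × Fin d) ℂ),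
    M.PosSemidef → (idTensorFun (⇑N) M).PosSemidef

/-- Max-relative entropy of entanglement of a channel: supremum over all finite ancilla
dimensions `n ≥ 1` and input states `ρ` of the infimum over separable states `σ` of
`D_max((id_n ⊗ N)(ρ) ‖ σ)`. -/
def EmaxChannel {d d' : ℕ}
    (N : Matrix (Fin d) (Fin d) ℂ →ₗ[ℂ] Matrix (Fin d') (Fin d') ℂ) : EReal :=
  sSup {x : EReal | ∃ n : ℕ, 0 < n ∧ ∃ ρ : Matrix (Fin n × Fin d) (Fin n × Fin d) ℂ,
    IsDensity ρ ∧
    x = sInf {y : EReal | ∃ σ : Matrix (Fin n × Fin d') (Fin n × Fin d') ℂ,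
      IsDensity σ ∧ SepState σ ∧ y = Dmax (idTensorFun (⇑N) ρ) σ}}

/-- The linear map `ρ ↦ M₁ ρ M₁† + M₂ ρ M₂†` given by two Kraus operators. -/
def krausMap2 (M₁ M₂ : Matrix (Fin 2) (Fin 2) ℂ) :
    Matrix (Fin 2) (Fin 2) ℂ →ₗ[ℂ] Matrix (Fin 2) (Fin 2) ℂ where
  toFun ρ := M₁ * ρ * M₁ᴴ + M₂ * ρ * M₂ᴴ
  map_add' x y := by
    simp only [mul_add, add_mul]
    abel
  map_smul' c x := by
    simp only [RingHom.id_apply]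
    simp [mul_smul_comm, smul_mul_assoc, smul_add]

/-- The qubit amplitude damping channel with damping parameter `l`. -/
def adChannel (l : ℝ) : Matrix (Fin 2) (Fin 2) ℂ →ₗ[ℂ] Matrix (Fin 2) (Fin 2) ℂ :=
  krausMap2 !![(1:ℂ), 0; 0, ((Real.sqrt (1 - l) : ℝ) : ℂ)]
            !![0, ((Real.sqrt l : ℝ) : ℂ); 0, 0]

/-! The upper bound comes from the measure-and-prepare map
`Φ(X) = ∑ⱼ ⟨aⱼ|X|aⱼ⟩ |bⱼ⟩⟨bⱼ|` with `aⱼ = |0⟩ + iʲ|1⟩` and `bⱼ = (|0⟩ + √(1-λ) iʲ|1⟩)/2`: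
it equals `N(X) + K₁XK₁† + K₂XK₂†` for `K₁ = √(1-λ)|1⟩⟨0|`, `K₂ = √(1-λ)|0⟩⟨1|`, and it
multiplies traces by `2 - λ`. So `σ = (id ⊗ Φ)(ρ)/(2-λ)` is separable and
`(2-λ)σ ≥ (id ⊗ N)(ρ)`.

For the lower bound, `Ω = ∑ᵢ |ii⟩` satisfies `⟨Ω|σ|Ω⟩ ≤ 1` on separable states, because
`Re ∑ᵢⱼ Pᵢⱼ Qᵢⱼ ≤ tr P · tr Q` for positive semidefinite `P, Q` (AM-GM on the 2×2 minors),
while `⟨Ω|(id ⊗ N)(ψ)|Ω⟩ = 2 - λ` for `ψ ∝ |φ⟩⟨φ|`, `φ = |00⟩ + √(1-λ)|11⟩`. -/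

open Complex

lemma Matrix.PosSemidef.normSq_apply_le {m : Type*} {A : Matrix m m ℂ} (hA : A.PosSemidef)
    (i j : m) : normSq (A i j) ≤ (A i i).re * (A j j).re := by
  have hdet := nonneg_iff.mp (hA.submatrix ![i, j]).det_nonneg
  rw [det_fin_two, submatrix_apply, submatrix_apply, submatrix_apply, submatrix_apply] at hdet
  simp only [Matrix.cons_val_zero, Matrix.cons_val_one] at hdet
  rw [← hA.1.apply j i, ← hA.1.coe_re_apply_self i, ← hA.1.coe_re_apply_self j, star_def,
    mul_conj] at hdet
  simpa [← ofReal_mul] using hdet.1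

lemma Matrix.PosSemidef.re_apply_mul_apply_le {m : Type*} {A B : Matrix m m ℂ}
    (hA : A.PosSemidef) (hB : B.PosSemidef) (i j : m) :
    (A i j * B i j).re ≤ ((A i i).re * (B j j).re + (A j j).re * (B i i).re) / 2 := by
  have hai := hA.diag_nonneg (i := i)
  have haj := hA.diag_nonneg (i := j)
  have hbi := hB.diag_nonneg (i := i)
  have hbj := hB.diag_nonneg (i := j)
  rw [nonneg_iff] at hai haj hbi hbj
  -- `‖Aᵢⱼ Bᵢⱼ‖² ≤ (Aᵢᵢ Bⱼⱼ)(Aⱼⱼ Bᵢᵢ)`, then AM-GM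
  have hsq :
      ‖A i j * B i j‖ ^ 2 ≤ (((A i i).re * (B j j).re + (A j j).re * (B i i).re) / 2) ^ 2 := by
    rw [norm_mul, mul_pow, ← normSq_eq_norm_sq, ← normSq_eq_norm_sq]
    nlinarith [mul_le_mul (hA.normSq_apply_le i j) (hB.normSq_apply_le i j) (normSq_nonneg _)
      (mul_nonneg hai.1 haj.1), sq_nonneg ((A i i).re * (B j j).re - (A j j).re * (B i i).re)]
  calc (A i j * B i j).re ≤ ‖A i j * B i j‖ := re_le_norm _
    _ ≤ _ := (pow_le_pow_iff_left₀ (norm_nonneg _) (by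
        have := mul_nonneg hai.1 hbj.1; have := mul_nonneg haj.1 hbi.1; positivity)
        two_ne_zero).mp hsq

lemma Matrix.PosSemidef.re_sum_apply_mul_apply_le {m : Type*} [Fintype m] {A B : Matrix m m ℂ}
    (hA : A.PosSemidef) (hB : B.PosSemidef) :
    (∑ i, ∑ j, A i j * B i j).re ≤ A.trace.re * B.trace.re := by
  calc (∑ i, ∑ j, A i j * B i j).re = ∑ i, ∑ j, (A i j * B i j).re := by simp only [re_sum]
    _ ≤ ∑ i, ∑ j, ((A i i).re * (B j j).re + (A j j).re * (B i i).re) / 2 :=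
      Finset.sum_le_sum fun i _ => Finset.sum_le_sum fun j _ => hA.re_apply_mul_apply_le hB i j
    _ = A.trace.re * B.trace.re := by
      simp only [trace, diag, re_sum, Finset.sum_mul_sum, ← Finset.sum_div, Finset.sum_add_distrib]
      rw [Finset.sum_comm (f := fun i j => (A j j).re * (B i i).re)]
      ring

section Separable

variable {m k : Type*} [Fintype m] [Fintype k]

lemma Matrix.PosSemidef.exists_eq_smul_isDensity [Nonempty m] {A : Matrix m m ℂ}
    (hA : A.PosSemidef) : ∃ t : ℝ, 0 ≤ t ∧ ∃ P, IsDensity P ∧ A = (t : ℂ) • P := by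
  classical
  have ht : 0 ≤ A.trace.re := (nonneg_iff.mp hA.trace_nonneg).1
  have htr : A.trace = A.trace.re := eq_re_of_ofReal_le (r := 0) (by
    rw [ofReal_zero]; exact hA.trace_nonneg)
  set t := A.trace.re
  rcases ht.eq_or_lt with h0 | hpos
  · obtain ⟨i⟩ := ‹Nonempty m›
    refine ⟨0, le_rfl, diagonal (Pi.single i 1), ⟨PosSemidef.diagonal ?_, by simp⟩, ?_⟩
    · exact Pi.single_nonneg.mpr zero_le_one
    · rw [ofReal_zero, zero_smul, ← hA.trace_eq_zero_iff, htr, ← h0, ofReal_zero]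
  · refine ⟨_, ht, ((t⁻¹ : ℝ) : ℂ) • A,
      ⟨hA.smul (zero_le_real.mpr (inv_nonneg.mpr ht)), ?_⟩, ?_⟩
    · rw [trace_smul, smul_eq_mul, htr, ← ofReal_mul, inv_mul_cancel₀ hpos.ne', ofReal_one]
    · rw [smul_smul, ← ofReal_mul, mul_inv_cancel₀ hpos.ne', ofReal_one, one_smul]

lemma SepState.isDensity {σ : Matrix (m × k) (m × k) ℂ} (hσ : SepState σ) : IsDensity σ := by
  classical
  obtain ⟨L, p, P, Q, hp, hsum, hP, hQ, rfl⟩ := hσ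
  refine ⟨posSemidef_sum _ fun i _ =>
    ((hP i).1.kronecker (hQ i).1).smul (zero_le_real.mpr (hp i)), ?_⟩
  simp [trace_sum, trace_kronecker, (hP _).2, (hQ _).2, ← ofReal_sum, hsum]

lemma sepState_inv_smul_sum_kronecker {L : ℕ} {X : Fin L → Matrix m m ℂ}
    {Y : Fin L → Matrix k k ℂ} (hX : ∀ i, (X i).PosSemidef) (hY : ∀ i, (Y i).PosSemidef)
    {c : ℝ} (hc : c ≠ 0) (htr : (∑ i, X i ⊗ₖ Y i).trace = c) :
    SepState (c⁻¹ • ∑ i, X i ⊗ₖ Y i) := by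
  have hne : Nonempty (m × k) := by
    by_contra h
    rw [not_nonempty_iff] at h
    exact hc (by simpa [trace] using htr.symm)
  have := (nonempty_prod.mp hne).1
  have := (nonempty_prod.mp hne).2
  choose t ht P hP hXP using fun i => (hX i).exists_eq_smul_isDensity
  choose u hu Q hQ hYQ using fun i => (hY i).exists_eq_smul_isDensity
  have hsum : ∑ i, X i ⊗ₖ Y i = ∑ i, ((t i * u i : ℝ) : ℂ) • (P i ⊗ₖ Q i) := by
    simp only [hXP, hYQ, smul_kronecker, kronecker_smul, smul_smul, ofReal_mul, mul_comm]
  have htu : ∑ i, t i * u i = c := by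
    rw [hsum] at htr
    simp only [trace_sum, trace_smul, trace_kronecker, (hP _).2, (hQ _).2, mul_one,
      smul_eq_mul] at htr
    exact_mod_cast htr
  have hcpos : 0 < c := htu ▸ (Finset.sum_nonneg fun i _ => mul_nonneg (ht i) (hu i)).lt_of_ne
    (htu ▸ hc).symm
  refine ⟨L, fun i => t i * u i / c, P, Q, fun i => by have := ht i; have := hu i; positivity,
    by rw [← Finset.sum_div, htu, div_self hc], hP, hQ, ?_⟩
  rw [hsum, Finset.smul_sum]
  refine Finset.sum_congr rfl fun i _ => ?_
  rw [← smul_assoc, real_smul]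
  congr 1
  push_cast
  ring

end Separable

def omegaVec (n : Type*) [DecidableEq n] : n × n → ℂ := fun p => if p.1 = p.2 then 1 else 0

section Witness

variable {n : Type*} [Fintype n] [DecidableEq n]

lemma dotProduct_kronecker_mulVec_omegaVec (A B : Matrix n n ℂ) :
    star (omegaVec n) ⬝ᵥ (A ⊗ₖ B) *ᵥ omegaVec n = ∑ i, ∑ j, A i j * B i j := by
  simp [omegaVec, dotProduct, mulVec, Fintype.sum_prod_type]

lemma SepState.re_dotProduct_mulVec_omegaVec_le_one {σ : Matrix (n × n) (n × n) ℂ}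
    (hσ : SepState σ) : (star (omegaVec n) ⬝ᵥ σ *ᵥ omegaVec n).re ≤ 1 := by
  obtain ⟨L, p, P, Q, hp, hsum, hP, hQ, rfl⟩ := hσ
  simp only [sum_mulVec, dotProduct_sum, smul_mulVec, dotProduct_smul,
    dotProduct_kronecker_mulVec_omegaVec, smul_eq_mul]
  rw [re_sum]
  simp only [re_ofReal_mul]
  calc ∑ i, p i * (∑ a, ∑ b, P i a b * Q i a b).re ≤ ∑ i, p i * 1 := by
        gcongr with i
        · exact hp i
        · simpa [(hP i).2, (hQ i).2] using (hP i).1.re_sum_apply_mul_apply_le (hQ i).1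
    _ = 1 := by simpa using hsum

end Witness

section Dmax

variable {n : Type*} [Fintype n]

lemma Dmax_le_logb {ρ σ : Matrix n n ℂ} {c : ℝ} (hc : 0 < c) (h : (c • σ - ρ).PosSemidef) :
    Dmax ρ σ ≤ (Real.logb 2 c : EReal) :=
  sInf_le ⟨Real.logb 2 c, rfl, by rwa [Real.rpow_logb two_pos (by norm_num) hc]⟩

lemma logb_le_Dmax {ρ σ : Matrix n n ℂ} {c : ℝ} (hc : 0 < c) (x : n → ℂ)
    (hρ : c ≤ (star x ⬝ᵥ ρ *ᵥ x).re) (hσ : (star x ⬝ᵥ σ *ᵥ x).re ≤ 1) :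
    (Real.logb 2 c : EReal) ≤ Dmax ρ σ := by
  refine le_sInf ?_
  rintro _ ⟨r, rfl, h⟩
  have hx := h.re_dotProduct_nonneg x
  rw [sub_mulVec, dotProduct_sub, smul_mulVec, dotProduct_smul, map_sub] at hx
  have h2r : 0 < (2 : ℝ) ^ r := by positivity
  rw [EReal.coe_le_coe_iff, Real.logb_le_iff_le_rpow one_lt_two hc]
  simp only [RCLike.re_to_complex, smul_re, smul_eq_mul] at hx
  nlinarith

end Dmax

lemma EmaxChannel_le {d d' : ℕ} {N : Matrix (Fin d) (Fin d) ℂ →ₗ[ℂ] Matrix (Fin d') (Fin d') ℂ}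
    {c : EReal} (h : ∀ n, ∀ ρ : Matrix (Fin n × Fin d) (Fin n × Fin d) ℂ, IsDensity ρ →
      ∃ σ, SepState σ ∧ Dmax (idTensorFun N ρ) σ ≤ c) :
    EmaxChannel N ≤ c := by
  refine sSup_le ?_
  rintro _ ⟨n, -, ρ, hρ, rfl⟩
  obtain ⟨σ, hσ, hle⟩ := h n ρ hρ
  exact le_trans (sInf_le ⟨σ, hσ.isDensity, hσ, rfl⟩) hle

lemma le_EmaxChannel {d d' : ℕ} {N : Matrix (Fin d) (Fin d) ℂ →ₗ[ℂ] Matrix (Fin d') (Fin d') ℂ}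
    {c : EReal} {n : ℕ} (hn : 0 < n) {ρ : Matrix (Fin n × Fin d) (Fin n × Fin d) ℂ}
    (hρ : IsDensity ρ) (h : ∀ σ, SepState σ → c ≤ Dmax (idTensorFun N ρ) σ) :
    c ≤ EmaxChannel N := by
  refine le_trans (le_sInf ?_) (le_sSup ⟨n, hn, ρ, hρ, rfl⟩)
  rintro _ ⟨σ, -, hσ, rfl⟩
  exact h σ hσ

section idTensorFun

variable {n d d' : Type*}

lemma idTensorFun_add (T₁ T₂ : Matrix d d ℂ → Matrix d' d' ℂ) (M : Matrix (n × d) (n × d) ℂ) :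
    idTensorFun (fun X => T₁ X + T₂ X) M = idTensorFun T₁ M + idTensorFun T₂ M :=
  rfl

lemma idTensorFun_mul_mul_conjTranspose [Fintype n] [DecidableEq n] [Fintype d]
    (A : Matrix d' d ℂ) (M : Matrix (n × d) (n × d) ℂ) :
    idTensorFun (fun X => A * X * Aᴴ) M =
      ((1 : Matrix n n ℂ) ⊗ₖ A) * M * ((1 : Matrix n n ℂ) ⊗ₖ A)ᴴ := by
  ext ⟨i, k⟩ ⟨j, l⟩
  simp [idTensorFun, mul_apply, conjTranspose_apply, one_apply, Fintype.sum_prod_type,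
    apply_ite (starRingEnd ℂ)]

lemma trace_idTensorFun [Fintype n] [Fintype d] [Fintype d'] {T : Matrix d d ℂ → Matrix d' d' ℂ}
    {c : ℂ} (hT : ∀ X, (T X).trace = c * X.trace) (M : Matrix (n × d) (n × d) ℂ) :
    (idTensorFun T M).trace = c * M.trace := by
  simp only [trace, diag, idTensorFun, of_apply, Fintype.sum_prod_type]
  rw [Finset.mul_sum]
  refine Finset.sum_congr rfl fun i _ => ?_
  simpa [trace] using hT (of fun a b => M (i, a) (i, b))

def idKronBra (n : Type*) [DecidableEq n] (a : d → ℂ) : Matrix n (n × d) ℂ :=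
  of fun i p => if i = p.1 then star (a p.2) else 0

lemma idKronBra_mul_mul_conjTranspose_apply [Fintype n] [DecidableEq n] [Fintype d] (a : d → ℂ)
    (M : Matrix (n × d) (n × d) ℂ) (i j : n) :
    (idKronBra n a * M * (idKronBra n a)ᴴ) i j =
      star a ⬝ᵥ (of fun x y => M (i, x) (j, y)) *ᵥ a := by
  simp [idKronBra, mul_apply, conjTranspose_apply, dotProduct, mulVec, Fintype.sum_prod_type,
    apply_ite (starRingEnd ℂ), Finset.mul_sum]
  rw [Finset.sum_comm]
  simp only [Finset.sum_mul, mul_assoc]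

lemma idTensorFun_measurePrepare [Fintype n] [DecidableEq n] [Fintype d] {ι : Type*} [Fintype ι]
    (a : ι → d → ℂ) (Y : ι → Matrix d' d' ℂ) (M : Matrix (n × d) (n × d) ℂ) :
    idTensorFun (fun X => ∑ j, (star (a j) ⬝ᵥ X *ᵥ a j) • Y j) M =
      ∑ j, (idKronBra n (a j) * M * (idKronBra n (a j))ᴴ) ⊗ₖ Y j := by
  ext ⟨i, k⟩ ⟨i', k'⟩
  simp [idTensorFun, Matrix.sum_apply, idKronBra_mul_mul_conjTranspose_apply]

end idTensorFun

section AmplitudeDamping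

variable {l : ℝ}

lemma ofReal_sqrt_one_sub_sq (hl : l ≤ 1) : (Real.sqrt (1 - l) : ℂ) ^ 2 = 1 - l := by
  rw [← ofReal_pow, Real.sq_sqrt (by linarith)]
  push_cast
  ring

def phaseVec (j : Fin 4) : Fin 2 → ℂ := ![1, I ^ (j : ℕ)]

def adPrepVec (l : ℝ) (j : Fin 4) : Fin 2 → ℂ :=
  ![1 / 2, (Real.sqrt (1 - l) : ℂ) * I ^ (j : ℕ) / 2]

def adDominatingMap (l : ℝ) (X : Matrix (Fin 2) (Fin 2) ℂ) : Matrix (Fin 2) (Fin 2) ℂ :=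
  ∑ j : Fin 4, (star (phaseVec j) ⬝ᵥ X *ᵥ phaseVec j) •
    vecMulVec (adPrepVec l j) (star (adPrepVec l j))

lemma adDominatingMap_eq (hl : l ∈ Set.Icc (0 : ℝ) 1) (X : Matrix (Fin 2) (Fin 2) ℂ) :
    adDominatingMap l X = adChannel l X
      + !![0, 0; (Real.sqrt (1 - l) : ℂ), 0] * X * !![0, 0; (Real.sqrt (1 - l) : ℂ), 0]ᴴ
      + !![0, (Real.sqrt (1 - l) : ℂ); 0, 0] * X * !![0, (Real.sqrt (1 - l) : ℂ); 0, 0]ᴴ := by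
  have hs := ofReal_sqrt_one_sub_sq hl.2
  have hr : (Real.sqrt l : ℂ) ^ 2 = l := by
    rw [← ofReal_pow, Real.sq_sqrt hl.1]
  ext i j
  fin_cases i <;> fin_cases j <;>
    simp [adDominatingMap, adChannel, krausMap2, phaseVec, adPrepVec, Fin.sum_univ_four,
      dotProduct, mulVec, vecMul, vecMulVec, mul_apply, Fin.sum_univ_two, conjTranspose_apply,
      map_ofNat, pow_three] <;>
    ring_nf <;>
    simp only [I_sq, I_pow_four] <;>
    first | ring1 | linear_combination -X 1 1 * (hr + hs)

lemma trace_adDominatingMap (hl : l ≤ 1) (X : Matrix (Fin 2) (Fin 2) ℂ) :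
    (adDominatingMap l X).trace = (2 - l : ℝ) * X.trace := by
  have hs := ofReal_sqrt_one_sub_sq hl
  simp [adDominatingMap, phaseVec, adPrepVec, trace_fin_two, Fin.sum_univ_four, dotProduct,
    mulVec, vecMulVec, Fin.sum_univ_two, map_ofNat, pow_three]
  ring_nf
  simp only [I_sq, I_pow_four]
  linear_combination (X 0 0 + X 1 1) * hs

lemma adChannel_exists_sepState {n : Type*} [Fintype n] [DecidableEq n]
    (hl : l ∈ Set.Icc (0 : ℝ) 1) {ρ : Matrix (n × Fin 2) (n × Fin 2) ℂ} (hρ : IsDensity ρ) :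
    ∃ σ, SepState σ ∧ ((2 - l) • σ - idTensorFun (adChannel l) ρ).PosSemidef := by
  have h2l : 2 - l ≠ 0 := by linarith [hl.2]
  refine ⟨(2 - l)⁻¹ • idTensorFun (adDominatingMap l) ρ, ?_, ?_⟩
  · have htr : (idTensorFun (adDominatingMap l) ρ).trace = (2 - l : ℝ) := by
      rw [trace_idTensorFun (trace_adDominatingMap hl.2), hρ.2, mul_one]
    unfold adDominatingMap at htr ⊢
    rw [idTensorFun_measurePrepare] at htr ⊢
    exact sepState_inv_smul_sum_kronecker (fun _ => hρ.1.mul_mul_conjTranspose_same _)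
      (fun _ => posSemidef_vecMulVec_self_star _) h2l htr
  · rw [smul_smul, mul_inv_cancel₀ h2l, one_smul, funext (adDominatingMap_eq hl),
      idTensorFun_add, idTensorFun_add, idTensorFun_mul_mul_conjTranspose,
      idTensorFun_mul_mul_conjTranspose, add_assoc, add_sub_cancel_left]
    exact (hρ.1.mul_mul_conjTranspose_same _).add (hρ.1.mul_mul_conjTranspose_same _)

def adInputVec (l : ℝ) : Fin 2 × Fin 2 → ℂ :=
  fun p => if p.1 = p.2 then ![1, (Real.sqrt (1 - l) : ℂ)] p.1 else 0

def adInputState (l : ℝ) : Matrix (Fin 2 × Fin 2) (Fin 2 × Fin 2) ℂ :=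
  (2 - l)⁻¹ • vecMulVec (adInputVec l) (star (adInputVec l))

lemma isDensity_adInputState (hl : l ∈ Set.Icc (0 : ℝ) 1) : IsDensity (adInputState l) := by
  have h2l : (2 : ℂ) - l ≠ 0 := by exact_mod_cast (show (2 : ℝ) - l ≠ 0 by linarith [hl.2])
  have hs := ofReal_sqrt_one_sub_sq hl.2
  refine ⟨(posSemidef_vecMulVec_self_star _).smul (inv_nonneg.mpr (by linarith [hl.2])), ?_⟩
  simp [adInputState, adInputVec, trace, Fintype.sum_prod_type, vecMulVec_apply]
  field_simp
  linear_combination hs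

lemma adChannel_adInputState_omegaVec (hl : l ∈ Set.Icc (0 : ℝ) 1) :
    star (omegaVec (Fin 2)) ⬝ᵥ idTensorFun (adChannel l) (adInputState l) *ᵥ omegaVec (Fin 2)
      = (2 - l : ℝ) := by
  have h2l : (2 : ℂ) - l ≠ 0 := by exact_mod_cast (show (2 : ℝ) - l ≠ 0 by linarith [hl.2])
  have hs := ofReal_sqrt_one_sub_sq hl.2
  simp [adInputState, adInputVec, omegaVec, idTensorFun, adChannel, krausMap2, dotProduct,
    mulVec, vecMul, Fintype.sum_prod_type, mul_apply, conjTranspose_apply, vecMulVec_apply,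
    Fin.sum_univ_two]
  field_simp
  linear_combination (3 - l + (Real.sqrt (1 - l) : ℂ) ^ 2) * hs

end AmplitudeDamping

/-- The max-relative entropy of entanglement of the qubit amplitude
damping channel equals `log₂(2−λ)`. -/
theorem stmt8 (l : ℝ) (hl : l ∈ Set.Icc (0:ℝ) 1) :
    EmaxChannel (adChannel l) = ((Real.logb 2 (2 - l) : ℝ) : EReal) := by
  have h2l : 0 < 2 - l := by linarith [hl.2]
  refine le_antisymm (EmaxChannel_le fun n ρ hρ => ?_)
    (le_EmaxChannel two_pos (isDensity_adInputState hl) fun σ hσ => ?_)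
  · obtain ⟨σ, hσ, hdom⟩ := adChannel_exists_sepState hl hρ
    exact ⟨σ, hσ, Dmax_le_logb h2l hdom⟩
  · refine logb_le_Dmax h2l (omegaVec (Fin 2)) ?_ hσ.re_dotProduct_mulVec_omegaVec_le_one
    rw [adChannel_adInputState_omegaVec hl, ofReal_re]
end
end
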